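/- For every well-formed suspension environment e and every natural number i, lev(e) ≥ ind_i(e); in particular the level of an environment is an upper bound on its index: lev(e) ≥ ind(e). -/
import Mathlib


mutual
inductive STerm : Type
  | const : ℕ → STerm
  | var   : ℕ → STerm
  | app   : STerm → STerm → STerm
  | lam   : STerm → STerm
  | susp  : STerm → ℕ → ℕ → SEnv → STerm
inductive SEnv : Type
  | nil   : SEnv
  | cons  : STerm → ℕ → SEnv → SEnv
  | merge : SEnv → ℕ → ℕ → SEnv → SEnv
end

/-- Length of an environment. -/
def SEnv.len : SEnv → ℕ
  | .nil => 0
  | .cons _ _ e => 1 + e.len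
  | .merge e1 nl1 ol2 _ => e1.len + (ol2 - nl1)

/-- Level of an environment. -/
def SEnv.lev : SEnv → ℕ
  | .nil => 0
  | .cons _ n _ => n
  | .merge _ nl1 ol2 e2 => e2.lev + (nl1 - ol2)

mutual
/-- Well-formedness of suspension terms. -/
def STerm.wf : STerm → Prop
  | .const _ => True
  | .var _ => True
  | .app t1 t2 => t1.wf ∧ t2.wf
  | .lam t => t.wf
  | .susp t ol nl e => t.wf ∧ e.wf ∧ e.len = ol ∧ e.lev ≤ nl
/-- Well-formedness of suspension environments. -/
def SEnv.wf : SEnv → Prop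
  | .nil => True
  | .cons t n e => t.wf ∧ e.wf ∧ e.lev ≤ n
  | .merge e1 nl1 ol2 e2 => e1.wf ∧ e2.wf ∧ e2.len = ol2 ∧ e1.lev ≤ nl1
end

/-- A simple environment: no merged environments on the top spine. -/
def SEnv.simple : SEnv → Prop
  | .nil => True
  | .cons _ _ e => e.simple
  | .merge _ _ _ _ => False


/-- The i-th index of an environment. -/
def SEnv.ind : SEnv → ℕ → ℕ
  | .nil, _ => 0
  | .cons _ k _, 0 => k
  | .cons _ _ e, i + 1 => e.ind i
  | .merge e1 nl ol e2, i =>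
      if i < e1.len then
        if nl - e1.ind i < e2.len then e2.ind (nl - e1.ind i) + (nl - ol)
        else e1.ind i
      else e2.ind (i - e1.len + nl)


theorem aux_ind_le_lev : ∀ (e : SEnv), e.wf → ∀ i : ℕ, e.ind i ≤ e.lev
  | .nil, _, i => by simp [SEnv.ind, SEnv.lev]
  | .cons t k e, hwf, 0 => by simp [SEnv.ind, SEnv.lev]
  | .cons t k e, hwf, i + 1 => by
    obtain ⟨_, hwfe, hle⟩ := hwf
    simp only [SEnv.ind, SEnv.lev]
    exact le_trans (aux_ind_le_lev e hwfe i) hle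
  | .merge e1 nl ol e2, hwf, i => by
    obtain ⟨h1, h2, hlen, hlev⟩ := hwf
    simp only [SEnv.ind, SEnv.lev]
    split
    · split
      · have := aux_ind_le_lev e2 h2 (nl - e1.ind i); omega
      · have := aux_ind_le_lev e1 h1 i; omega
    · have := aux_ind_le_lev e2 h2 (i - e1.len + nl); omega

/-- the level of a well-formed environment is an upper bound
on all of its indices, in particular on its index ind(e) = ind₀(e). -/
theorem stmt12 (e : SEnv) (hwf : e.wf) :
    (∀ i : ℕ, e.ind i ≤ e.lev) ∧ e.ind 0 ≤ e.lev := by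
  exact ⟨aux_ind_le_lev e hwf, aux_ind_le_lev e hwf 0⟩
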